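/- arXiv:0903.4478 — 4 statements merged into one kernel-verified Lean document; each statement's English description precedes it below -/
import Mathlib

section
/- Let ħ(β₁,β₂) = β₁·ln(β₁/β₂) + (1−β₁)·ln((1−β₁)/(1−β₂)) for β₁, β₂ ∈ (0,1). Define H(p,λ) = ħ(Φ(p,λ), p). Then for all p ∈ [0,1] and λ ∈ ℝ, 0 ≤ H(p,λ) ≤ |λ|. -/
open Real Set

noncomputable def Phi (p l : ℝ) : ℝ := p * Real.exp l / (1 - p + p * Real.exp l)

/-- Relative entropy of Bernoulli(b₁) w.r.t. Bernoulli(b₂) (finite-formula version,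
which takes the correct value 0 at the degenerate points used here). -/
noncomputable def hbar (b1 b2 : ℝ) : ℝ :=
  b1 * Real.log (b1 / b2) + (1 - b1) * Real.log ((1 - b1) / (1 - b2))

noncomputable def Hfun (p l : ℝ) : ℝ := hbar (Phi p l) p

/-!
Write `D = 1 - p + p e^λ` for the moment generating function of Bernoulli(p) and `q = Φ(p,λ)`, so
that `q = p e^λ / D` and `1 - q = (1 - p) / D`. Then `H(p,λ) = qλ - log D`. The lower bound is
Gibbs' inequality `ħ ≥ 0`. For the upper bound, `q ∈ [0,1]` gives `qλ ≤ max(λ,0)`, and `D`, a convex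
combination of `1` and `e^λ`, is at least `e^{min(λ,0)}`; hence `H ≤ max(λ,0) - min(λ,0) = |λ|`.
At the endpoints `p ∈ {0,1}` we have `Φ(p,λ) = p`, so `H = ħ(p,p) = 0`.
-/

theorem sub_le_mul_log_div {a b : ℝ} (ha : 0 ≤ a) (hb : 0 < b) : a - b ≤ a * log (a / b) := by
  rcases ha.eq_or_lt with rfl | ha
  · simpa using hb.le
  have h := mul_le_mul_of_nonneg_left (one_sub_inv_le_log_of_pos (div_pos ha hb)) ha.le
  rwa [inv_div, mul_sub, mul_one, mul_div_cancel₀ _ ha.ne'] at h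

theorem hbar_nonneg {a b : ℝ} (ha : a ∈ Icc 0 1) (hb : b ∈ Ioo 0 1) : 0 ≤ hbar a b := by
  have h₁ := sub_le_mul_log_div ha.1 hb.1
  have h₂ := sub_le_mul_log_div (sub_nonneg.2 ha.2) (sub_pos.2 hb.2)
  unfold hbar
  linarith

theorem hbar_self (b : ℝ) : hbar b b = 0 := by
  rcases eq_or_ne b 0 with rfl | hb
  · simp [hbar]
  rcases eq_or_ne (1 - b) 0 with hb' | hb'
  · simp [hbar, hb']
  simp [hbar, div_self hb, div_self hb']

theorem one_sub_add_mul_exp_pos {p : ℝ} (hp : p ∈ Icc 0 1) (l : ℝ) :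
    0 < 1 - p + p * exp l := by
  rcases hp.2.lt_or_eq with hp₁ | rfl
  · linarith [mul_nonneg hp.1 (exp_pos l).le]
  · simpa using exp_pos l

theorem one_sub_Phi {p : ℝ} (hp : p ∈ Icc 0 1) (l : ℝ) :
    1 - Phi p l = (1 - p) / (1 - p + p * exp l) := by
  have hD := one_sub_add_mul_exp_pos hp l
  rw [Phi, eq_div_iff hD.ne', sub_mul, div_mul_cancel₀ _ hD.ne']
  ring

theorem Phi_mem_Ioo {p : ℝ} (hp : p ∈ Ioo 0 1) (l : ℝ) : Phi p l ∈ Ioo 0 1 := by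
  have hD := one_sub_add_mul_exp_pos (Ioo_subset_Icc_self hp) l
  have h₁ : 0 < 1 - Phi p l := by
    rw [one_sub_Phi (Ioo_subset_Icc_self hp)]
    exact div_pos (sub_pos.2 hp.2) hD
  exact ⟨div_pos (mul_pos hp.1 (exp_pos l)) hD, by linarith⟩

theorem min_le_log_one_sub_add_mul_exp {p : ℝ} (hp : p ∈ Icc 0 1) (l : ℝ) :
    min l 0 ≤ log (1 - p + p * exp l) := by
  rw [le_log_iff_exp_le (one_sub_add_mul_exp_pos hp l)]
  rcases le_total l 0 with hl | hl
  · rw [min_eq_left hl]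
    nlinarith [exp_le_one_iff.2 hl, hp.2]
  · rw [min_eq_right hl, exp_zero]
    nlinarith [one_le_exp hl, hp.1]

theorem Hfun_eq {p : ℝ} (hp : p ∈ Ioo 0 1) (l : ℝ) :
    Hfun p l = Phi p l * l - log (1 - p + p * exp l) := by
  have hD := one_sub_add_mul_exp_pos (Ioo_subset_Icc_self hp) l
  have hq : Phi p l / p = exp l / (1 - p + p * exp l) := by
    rw [Phi, div_right_comm, mul_div_cancel_left₀ _ hp.1.ne']
  have h1q : (1 - Phi p l) / (1 - p) = 1 / (1 - p + p * exp l) := by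
    rw [one_sub_Phi (Ioo_subset_Icc_self hp), div_right_comm, div_self (sub_pos.2 hp.2).ne']
  rw [Hfun, hbar, hq, h1q, log_div (exp_ne_zero l) hD.ne', log_exp, one_div, log_inv]
  ring

theorem Hfun_le_abs {p : ℝ} (hp : p ∈ Ioo 0 1) (l : ℝ) : Hfun p l ≤ |l| := by
  have hq := Phi_mem_Ioo hp l
  have hql : Phi p l * l ≤ max l 0 := by
    rcases le_total 0 l with hl | hl
    · rw [max_eq_left hl]; nlinarith [hq.2]
    · rw [max_eq_right hl]; nlinarith [hq.1]
  have hmaxmin : max l 0 - min l 0 = |l| := by rw [max_sub_min_eq_abs', sub_zero]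
  rw [Hfun_eq hp]
  linarith [min_le_log_one_sub_add_mul_exp (Ioo_subset_Icc_self hp) l]

theorem Hfun_zero_left (l : ℝ) : Hfun 0 l = 0 := by
  simp [Hfun, Phi, hbar_self]

theorem Hfun_one_left (l : ℝ) : Hfun 1 l = 0 := by
  rw [Hfun, Phi, sub_self, zero_add, one_mul, div_self (exp_ne_zero l), hbar_self]

theorem stmt_5 (p l : ℝ) (hp : p ∈ Set.Icc (0:ℝ) 1) :
    0 ≤ Hfun p l ∧ Hfun p l ≤ |l| := by
  rcases hp.1.eq_or_lt with rfl | hp₀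
  · simp [Hfun_zero_left]
  rcases hp.2.eq_or_lt with rfl | hp₁
  · simp [Hfun_one_left]
  exact ⟨hbar_nonneg (Ioo_subset_Icc_self (Phi_mem_Ioo ⟨hp₀, hp₁⟩ l)) ⟨hp₀, hp₁⟩,
    Hfun_le_abs ⟨hp₀, hp₁⟩ l⟩
end

section
/- For p ∈ (0,1) and λ ∈ ℝ, with H(p,λ) = ħ(Φ(p,λ),p), the partial derivative ∂H/∂λ(p,λ) equals λ·∂Φ/∂λ(p,λ); consequently |∂H/∂λ(p,λ)| ≤ |λ| and |H(p,λ₁) − H(p,λ₂)| ≤ (|λ₁| + |λ₂|)·|λ₁ − λ₂| for all λ₁, λ₂ ∈ ℝ. -/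
/-!
With `D = 1 - p + p e^λ` one has `Φ/p = e^λ/D` and `(1 - Φ)/(1 - p) = 1/D`, so the logarithms in
`ħ(Φ, p)` collapse to `H(p, λ) = λ Φ(p, λ) - log D`. As `∂(log D)/∂λ = Φ`, the terms `Φ` cancel in
`∂H/∂λ`, leaving `λ ∂Φ/∂λ`; and `0 ≤ ∂Φ/∂λ ≤ 1/4` by AM-GM on `D = (1 - p) + p e^λ`. The mean value
theorem on the segment between `λ₁` and `λ₂`, where `|λ| ≤ max |λ₁| |λ₂|`, gives the last bound.
-/

open Real Set

theorem abs_image_sub_le_of_abs_hasDerivAt_le_abs {f f' : ℝ → ℝ}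
    (hf : ∀ x, HasDerivAt f (f' x) x) (hf' : ∀ x, |f' x| ≤ |x|) (a b : ℝ) :
    |f a - f b| ≤ max |a| |b| * |a - b| := by
  have bound : ∀ x ∈ uIcc b a, ‖f' x‖ ≤ max |a| |b| := by
    intro x hx
    refine (hf' x).trans ?_
    rcases mem_uIcc.1 hx with ⟨hbx, hxa⟩ | ⟨hax, hxb⟩
    · exact max_comm |a| |b| ▸ abs_le_max_abs_abs hbx hxa
    · exact abs_le_max_abs_abs hax hxb
  exact (convex_uIcc b a).norm_image_sub_le_of_norm_hasDerivWithin_le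
    (fun x _ => (hf x).hasDerivWithinAt) bound left_mem_uIcc right_mem_uIcc

section Phi

variable {p : ℝ}

theorem Phi_denom_pos (hp : p ∈ Icc (0 : ℝ) 1) (l : ℝ) : 0 < 1 - p + p * exp l := by
  rcases eq_or_lt_of_le hp.2 with rfl | hp1
  · simp [exp_pos]
  · linarith [mul_nonneg hp.1 (exp_pos l).le]

noncomputable def phiDeriv (p l : ℝ) : ℝ := p * (1 - p) * exp l / (1 - p + p * exp l) ^ 2

theorem hasDerivAt_Phi (hp : p ∈ Icc (0 : ℝ) 1) (l : ℝ) :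
    HasDerivAt (Phi p) (phiDeriv p l) l := by
  have hD := ((hasDerivAt_exp l).const_mul p).const_add (1 - p)
  refine (((hasDerivAt_exp l).const_mul p).div hD (Phi_denom_pos hp l).ne').congr_deriv ?_
  rw [phiDeriv]
  ring

theorem phiDeriv_nonneg (hp : p ∈ Icc (0 : ℝ) 1) (l : ℝ) : 0 ≤ phiDeriv p l := by
  have : 0 ≤ 1 - p := sub_nonneg.2 hp.2
  have := hp.1
  unfold phiDeriv
  positivity

theorem phiDeriv_le_one_div_four (hp : p ∈ Icc (0 : ℝ) 1) (l : ℝ) : phiDeriv p l ≤ 1 / 4 := by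
  rw [phiDeriv, div_le_iff₀ (pow_pos (Phi_denom_pos hp l) 2)]
  nlinarith [sq_nonneg (1 - p - p * exp l)]

end Phi

theorem Hfun_eq_mul_Phi_sub_log {p : ℝ} (hp : p ∈ Ioo (0 : ℝ) 1) (l : ℝ) :
    Hfun p l = l * Phi p l - log (1 - p + p * exp l) := by
  have hD := (Phi_denom_pos (Ioo_subset_Icc_self hp) l).ne'
  have hp0 : p ≠ 0 := hp.1.ne'
  have hp1 : 1 - p ≠ 0 := (sub_pos.2 hp.2).ne'
  have hratio : Phi p l / p = exp l / (1 - p + p * exp l) := by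
    unfold Phi
    field_simp
  have hratio' : (1 - Phi p l) / (1 - p) = 1 / (1 - p + p * exp l) := by
    unfold Phi
    field_simp
    ring
  rw [Hfun, hbar, hratio, hratio', log_div (exp_ne_zero l) hD, log_exp, one_div, log_inv]
  ring

theorem hasDerivAt_Hfun {p : ℝ} (hp : p ∈ Ioo (0 : ℝ) 1) (l : ℝ) :
    HasDerivAt (Hfun p) (l * phiDeriv p l) l := by
  have hp' := Ioo_subset_Icc_self hp
  have hlog := (((hasDerivAt_exp l).const_mul p).const_add (1 - p)).log
    (Phi_denom_pos hp' l).ne'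
  rw [show Hfun p = fun m => m * Phi p m - log (1 - p + p * exp m) from
    funext (Hfun_eq_mul_Phi_sub_log hp)]
  refine (((hasDerivAt_id l).mul (hasDerivAt_Phi hp' l)).sub hlog).congr_deriv ?_
  rw [Phi, phiDeriv, id_eq]
  ring

theorem stmt_6 (p : ℝ) (hp : p ∈ Set.Ioo (0:ℝ) 1) :
    (∀ l : ℝ,
      HasDerivAt (fun m => Hfun p m)
        (l * (p * (1 - p) * Real.exp l / (1 - p + p * Real.exp l) ^ 2)) l ∧
      |l * (p * (1 - p) * Real.exp l / (1 - p + p * Real.exp l) ^ 2)| ≤ |l|) ∧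
    ∀ l1 l2 : ℝ, |Hfun p l1 - Hfun p l2| ≤ (|l1| + |l2|) * |l1 - l2| := by
  have hp' := Ioo_subset_Icc_self hp
  have deriv_bound : ∀ l : ℝ, |l * phiDeriv p l| ≤ |l| := fun l => by
    rw [abs_mul, abs_of_nonneg (phiDeriv_nonneg hp' l)]
    exact mul_le_of_le_one_right (abs_nonneg l) (by linarith [phiDeriv_le_one_div_four hp' l])
  refine ⟨fun l => ⟨hasDerivAt_Hfun hp l, deriv_bound l⟩, fun l1 l2 => ?_⟩
  calc |Hfun p l1 - Hfun p l2|
      ≤ max |l1| |l2| * |l1 - l2| :=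
        abs_image_sub_le_of_abs_hasDerivAt_le_abs (hasDerivAt_Hfun hp) deriv_bound l1 l2
    _ ≤ (|l1| + |l2|) * |l1 - l2| := by
        gcongr
        exact max_le_add_of_nonneg (abs_nonneg _) (abs_nonneg _)
end

section
/- Fix a probability measure V̄ on [0,1] with V̄((0,1)) > 0 (equivalently V̄({0}) + V̄({1}) < 1). Then the function λ ↦ ∫_{[0,1]} Φ(p,λ) dV̄(p), extended to λ = ±∞ by Φ(p,−∞) = 1_{p=1} and Φ(p,+∞) = 1_{p>0}, is continuous and strictly increasing on [−∞,∞], with value V̄({1}) at −∞ and V̄((0,1]) at +∞. Consequently, for every α' with V̄({1}) ≤ α' ≤ 1 − V̄({0}) and (α',V̄) ≠ (V̄({1}), 1−V̄({0})) degenerate, there exists a unique Λ ∈ [−∞,∞] with ∫ Φ(p,Λ) dV̄(p) = α'; and if V̄({1}) < α' < 1 − V̄({0}) then Λ ∈ ℝ. -/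
/-!
For `0 < p < 1`, `Φ(p, λ) = σ(λ + log (p / (1 - p)))` with `σ` the logistic sigmoid: `λ` is added
to the prior log-odds of `p`. So `Φ(p, ·)` is a strictly increasing bijection of `[-∞, ∞]` onto
`[0, 1]`, hence continuous, while for `p ∈ {0, 1}` it is constant. Dominated convergence makes
`λ ↦ ∫ Φ(p, λ) dV̄(p)` continuous, and it is strictly increasing because `V̄` charges `(0, 1)`.
Its values at `∓∞` are `V̄({1})` and `V̄((0, 1]) = 1 - V̄({0})`; the intermediate value theorem on
the compact interval `[-∞, ∞]` and injectivity give a unique solution, which is finite when `α'`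
lies strictly between these values.
-/

open MeasureTheory Set

/-- `Φ(p,λ)` extended to `λ ∈ [-∞,∞]`. -/
noncomputable def PhiE (p : ℝ) (l : EReal) : ℝ :=
  if l = ⊤ then (if 0 < p then 1 else 0)
  else if l = ⊥ then (if p = 1 then 1 else 0)
  else p * Real.exp l.toReal / (1 - p + p * Real.exp l.toReal)

open Real

lemma EReal.strictMono_of_coe {α : Type*} [Preorder α] {f : EReal → α}
    (hcoe : StrictMono fun x : ℝ => f x) (hbot : ∀ x : ℝ, f ⊥ < f x)
    (htop : ∀ x : ℝ, f x < f ⊤) : StrictMono f :=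
  WithBot.strictMono_iff.2 ⟨WithTop.strictMono_iff.2 ⟨hcoe, htop⟩,
    WithTop.forall.2 ⟨(hbot 0).trans (htop 0), hbot⟩⟩

lemma PhiE_coe (p x : ℝ) : PhiE p x = p * exp x / (1 - p + p * exp x) := by
  simp [PhiE]

lemma PhiE_bot (p : ℝ) : PhiE p ⊥ = ({1} : Set ℝ).indicator 1 p := by
  simp [PhiE, indicator]

lemma PhiE_top (p : ℝ) : PhiE p ⊤ = (Ioi 0).indicator 1 p := by
  simp [PhiE, indicator]

lemma PhiE_zero : PhiE 0 = 0 := by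
  ext l; simp [PhiE]

lemma PhiE_one : PhiE 1 = 1 := by
  ext l; simp [PhiE, exp_ne_zero]

lemma PhiE_bot_of_lt_one {p : ℝ} (hp : p < 1) : PhiE p ⊥ = 0 := by
  simp [PhiE, hp.ne]

lemma PhiE_top_of_pos {p : ℝ} (hp : 0 < p) : PhiE p ⊤ = 1 := by
  simp [PhiE, hp]

lemma PhiE_coe_eq_sigmoid {p : ℝ} (hp0 : 0 < p) (hp1 : p < 1) (x : ℝ) :
    PhiE p x = sigmoid (x + log (p / (1 - p))) := by
  have hq : 0 < 1 - p := sub_pos.2 hp1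
  rw [PhiE_coe, sigmoid_def, neg_add, exp_add, exp_neg, exp_neg, exp_log (div_pos hp0 hq)]
  field_simp
  ring

lemma strictMono_PhiE {p : ℝ} (hp0 : 0 < p) (hp1 : p < 1) : StrictMono (PhiE p) := by
  refine EReal.strictMono_of_coe ?_ (fun x => ?_) (fun x => ?_)
  · simp only [PhiE_coe_eq_sigmoid hp0 hp1]
    exact sigmoid_strictMono.comp (strictMono_id.add_const _)
  · rw [PhiE_bot_of_lt_one hp1, PhiE_coe_eq_sigmoid hp0 hp1]; exact sigmoid_pos _
  · rw [PhiE_top_of_pos hp0, PhiE_coe_eq_sigmoid hp0 hp1]; exact sigmoid_lt_one _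

lemma range_PhiE {p : ℝ} (hp0 : 0 < p) (hp1 : p < 1) : range (PhiE p) = Icc 0 1 := by
  refine subset_antisymm ?_ fun y hy => ?_
  · rintro _ ⟨l, rfl⟩
    rw [← PhiE_bot_of_lt_one hp1, ← PhiE_top_of_pos hp0]
    exact ⟨(strictMono_PhiE hp0 hp1).monotone bot_le, (strictMono_PhiE hp0 hp1).monotone le_top⟩
  rcases hy.1.eq_or_lt with rfl | hy0
  · exact ⟨⊥, PhiE_bot_of_lt_one hp1⟩
  rcases hy.2.eq_or_lt with rfl | hy1
  · exact ⟨⊤, PhiE_top_of_pos hp0⟩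
  obtain ⟨x, hx⟩ : y ∈ range sigmoid := range_sigmoid ▸ ⟨hy0, hy1⟩
  exact ⟨(x - log (p / (1 - p)) : ℝ), by rw [PhiE_coe_eq_sigmoid hp0 hp1, sub_add_cancel, hx]⟩

lemma PhiE_mem_Icc {p : ℝ} (hp0 : 0 ≤ p) (hp1 : p ≤ 1) (l : EReal) : PhiE p l ∈ Icc 0 1 := by
  rcases hp0.eq_or_lt with rfl | hp0
  · simp [PhiE_zero]
  rcases hp1.eq_or_lt with rfl | hp1
  · simp [PhiE_one]
  exact range_PhiE hp0 hp1 ▸ mem_range_self l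

lemma norm_PhiE_le_one {p : ℝ} (hp0 : 0 ≤ p) (hp1 : p ≤ 1) (l : EReal) : ‖PhiE p l‖ ≤ 1 := by
  obtain ⟨h0, h1⟩ := PhiE_mem_Icc hp0 hp1 l
  rwa [Real.norm_of_nonneg h0]

lemma monotone_PhiE {p : ℝ} (hp0 : 0 ≤ p) (hp1 : p ≤ 1) : Monotone (PhiE p) := by
  rcases hp0.eq_or_lt with rfl | hp0
  · rw [PhiE_zero]; exact monotone_const
  rcases hp1.eq_or_lt with rfl | hp1
  · rw [PhiE_one]; exact monotone_const
  exact (strictMono_PhiE hp0 hp1).monotone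

lemma continuous_PhiE {p : ℝ} (hp0 : 0 ≤ p) (hp1 : p ≤ 1) : Continuous (PhiE p) := by
  rcases hp0.eq_or_lt with rfl | hp0
  · rw [PhiE_zero]; exact continuous_const
  rcases hp1.eq_or_lt with rfl | hp1
  · rw [PhiE_one]; exact continuous_const
  have hsurj :
      Function.Surjective (codRestrict (PhiE p) (Icc 0 1) (PhiE_mem_Icc hp0.le hp1.le)) := by
    rintro ⟨y, hy⟩
    obtain ⟨l, rfl⟩ := (range_PhiE hp0 hp1).symm ▸ hy
    exact ⟨l, rfl⟩
  exact continuous_subtype_val.comp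
    (((strictMono_PhiE hp0 hp1).monotone.codRestrict _).continuous_of_surjective hsurj)

lemma measurable_PhiE (l : EReal) : Measurable (PhiE · l) := by
  induction l using EReal.rec with
  | bot => simp only [PhiE_bot]; exact measurable_one.indicator (measurableSet_singleton 1)
  | coe x => simp only [PhiE_coe]; fun_prop
  | top => simp only [PhiE_top]; exact measurable_one.indicator measurableSet_Ioi

section IntegralPhiE

variable (V : Measure (Icc (0:ℝ) 1))

lemma integral_PhiE_bot : ∫ p, PhiE p ⊥ ∂V = V.real {p | (p : ℝ) = 1} := by
  simp only [PhiE_bot, ← indicator_comp_right, Pi.one_comp]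
  exact integral_indicator_one ((measurableSet_singleton 1).preimage measurable_subtype_coe)

lemma integral_PhiE_top : ∫ p, PhiE p ⊤ ∂V = V.real {p | 0 < (p : ℝ)} := by
  simp only [PhiE_top, ← indicator_comp_right, Pi.one_comp]
  exact integral_indicator_one (measurableSet_Ioi.preimage measurable_subtype_coe)

variable [IsFiniteMeasure V]

lemma integrable_PhiE (l : EReal) : Integrable (fun p : Icc (0:ℝ) 1 => PhiE p l) V :=
  (integrable_const 1).mono'
    ((measurable_PhiE l).comp measurable_subtype_coe).aestronglyMeasurable
    (ae_of_all _ fun p => norm_PhiE_le_one p.2.1 p.2.2 l)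

lemma continuous_integral_PhiE : Continuous fun l => ∫ p, PhiE p l ∂V :=
  continuous_of_dominated (fun l => (integrable_PhiE V l).aestronglyMeasurable)
    (fun l => ae_of_all _ fun p => norm_PhiE_le_one p.2.1 p.2.2 l)
    (integrable_const 1) (ae_of_all _ fun p => continuous_PhiE p.2.1 p.2.2)

lemma strictMono_integral_PhiE (hV : V {p | 0 < (p : ℝ) ∧ (p : ℝ) < 1} ≠ 0) :
    StrictMono fun l => ∫ p, PhiE p l ∂V := by
  intro a b hab
  have hle : ∀ p : Icc (0:ℝ) 1, PhiE p a ≤ PhiE p b := fun p => monotone_PhiE p.2.1 p.2.2 hab.le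
  rw [← sub_pos, ← integral_sub (integrable_PhiE V b) (integrable_PhiE V a),
    integral_pos_iff_support_of_nonneg_ae (ae_of_all _ fun p => sub_nonneg.2 (hle p))
      ((integrable_PhiE V b).sub (integrable_PhiE V a))]
  refine pos_iff_ne_zero.2 (mt (measure_mono_null fun p hp => ?_) hV)
  exact (sub_pos.2 (strictMono_PhiE hp.1 hp.2 hab)).ne'

end IntegralPhiE

lemma measureReal_pos_eq_one_sub (V : Measure (Icc (0:ℝ) 1)) [IsProbabilityMeasure V] :
    V.real {p | 0 < (p : ℝ)} = 1 - V.real {p | (p : ℝ) = 0} := by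
  rw [← probReal_compl_eq_one_sub (s := {p : Icc (0:ℝ) 1 | (p : ℝ) = 0})
    ((measurableSet_singleton 0).preimage measurable_subtype_coe)]
  congr 1
  ext p
  exact p.2.1.lt_iff_ne'

theorem stmt_10 (V : Measure (Set.Icc (0:ℝ) 1)) [IsProbabilityMeasure V]
    (hV : 0 < (V {p | 0 < (p : ℝ) ∧ (p : ℝ) < 1}).toReal) :
    Continuous (fun l : EReal => ∫ p, PhiE (p : ℝ) l ∂V) ∧
    StrictMono (fun l : EReal => ∫ p, PhiE (p : ℝ) l ∂V) ∧
    (∫ p, PhiE (p : ℝ) (⊥ : EReal) ∂V) = (V {p | (p : ℝ) = 1}).toReal ∧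
    (∫ p, PhiE (p : ℝ) (⊤ : EReal) ∂V) = (V {p | 0 < (p : ℝ)}).toReal ∧
    ∀ α' : ℝ,
      (V {p | (p : ℝ) = 1}).toReal ≤ α' →
      α' ≤ 1 - (V {p | (p : ℝ) = 0}).toReal →
      ¬((V {p | (p : ℝ) = 1}).toReal = α' ∧ α' = 1 - (V {p | (p : ℝ) = 0}).toReal) →
      (∃! Λ : EReal, (∫ p, PhiE (p : ℝ) Λ ∂V) = α') ∧
      ((V {p | (p : ℝ) = 1}).toReal < α' → α' < 1 - (V {p | (p : ℝ) = 0}).toReal →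
        ∀ Λ : EReal, (∫ p, PhiE (p : ℝ) Λ ∂V) = α' → Λ ≠ ⊤ ∧ Λ ≠ ⊥) := by
  have hcont := continuous_integral_PhiE V
  have hmono := strictMono_integral_PhiE V (ENNReal.toReal_pos_iff.1 hV).1.ne'
  have hbot := integral_PhiE_bot V
  have htop := (integral_PhiE_top V).trans (measureReal_pos_eq_one_sub V)
  refine ⟨hcont, hmono, hbot, integral_PhiE_top V, fun α' hα₁ hα₀ _ => ⟨?_, ?_⟩⟩
  · obtain ⟨Λ, -, hΛ⟩ := intermediate_value_Icc bot_le hcont.continuousOn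
      ⟨hbot.trans_le hα₁, hα₀.trans_eq htop.symm⟩
    exact ⟨Λ, hΛ, fun Λ' hΛ' => hmono.injective (hΛ'.trans hΛ.symm)⟩
  · rintro hα₁ hα₀ Λ rfl
    constructor <;> rintro rfl
    exacts [hα₀.ne htop, hα₁.ne' hbot]
end

section
/- Let X₁,…,X_N be independent Bernoulli random variables with parameters ũ₁,…,ũ_N ∈ [0,1] and γ = Σ(X_n − ũ_n). Then there is a constant κ > 0 (independent of N and the ũ_n) such that |E[e^{i(θ/√N)γ}]| ≤ exp(−κ·σ²_N·θ²) for all θ ∈ (−π√N, π√N), where σ²_N = (1/N)·Σ_{n=1}^N ũ_n(1 − ũ_n). -/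
/-!
By independence the characteristic function of `γ` is the product of the Bernoulli factors
`E[exp(i t (X - u))] = exp(-i t u) (1 + u (exp(i t) - 1))`. The squared modulus of such a factor
is `1 - 2 u (1 - u) (1 - cos t)`, and Jordan's inequality `1 - cos t ≥ 2 t² / π²` for `|t| ≤ π`
together with `1 - x ≤ exp(-x)` bounds it by `exp(-(4/π²) u (1 - u) t²)`; so `κ = 2/π²` works.
-/

open MeasureTheory ProbabilityTheory Real

theorem integral_comp_of_eq_zero_or_one {Ω E : Type*} [MeasurableSpace Ω] {μ : Measure Ω}
    [IsProbabilityMeasure μ] [NormedAddCommGroup E] [NormedSpace ℝ E] [CompleteSpace E]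
    {X : Ω → ℝ} (hX : Measurable X) (h01 : ∀ ω, X ω = 0 ∨ X ω = 1) (f : ℝ → E) :
    ∫ ω, f (X ω) ∂μ = (1 - μ.real {ω | X ω = 1}) • f 0 + μ.real {ω | X ω = 1} • f 1 := by
  have hf : (fun ω => f (X ω))
      = fun ω => f 0 + {ω | X ω = 1}.indicator (fun _ => f 1 - f 0) ω := by
    funext ω
    rcases h01 ω with h | h <;> simp [h]
  have hmeas : MeasurableSet {ω | X ω = 1} := hX (measurableSet_singleton 1)
  rw [hf, integral_add (integrable_const _) ((integrable_const _).indicator hmeas),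
    integral_const, integral_indicator_const _ hmeas, probReal_univ, one_smul, smul_sub, sub_smul,
    one_smul]
  abel

theorem norm_one_add_mul_exp_sub_one_le {u t : ℝ} (hu : u ∈ Set.Icc (0 : ℝ) 1) (ht : |t| ≤ π) :
    ‖1 + u * (Complex.exp (t * Complex.I) - 1)‖
      ≤ Real.exp (-(2 / π ^ 2 * (u * (1 - u)) * t ^ 2)) := by
  set z : ℂ := 1 + u * (Complex.exp (t * Complex.I) - 1)
  have hvar : 0 ≤ u * (1 - u) := mul_nonneg hu.1 (sub_nonneg.2 hu.2)
  have hnormSq : Complex.normSq z = 1 - 2 * (u * (1 - u)) * (1 - Real.cos t) := by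
    rw [Complex.normSq_apply]
    simp only [z, Complex.add_re, Complex.add_im, Complex.mul_re, Complex.mul_im,
      Complex.sub_re, Complex.sub_im, Complex.exp_ofReal_mul_I_re, Complex.exp_ofReal_mul_I_im,
      Complex.ofReal_re, Complex.ofReal_im, Complex.one_re, Complex.one_im]
    linear_combination u ^ 2 * Real.sin_sq_add_cos_sq t
  have hcos := Real.cos_le_one_sub_mul_cos_sq ht
  rw [← pow_le_pow_iff_left₀ (norm_nonneg z) (Real.exp_nonneg _) two_ne_zero, Complex.sq_norm,
    hnormSq, ← Real.exp_nat_mul]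
  calc 1 - 2 * (u * (1 - u)) * (1 - Real.cos t)
      ≤ 1 - 2 * (u * (1 - u)) * (2 / π ^ 2 * t ^ 2) := by gcongr; linarith
    _ ≤ Real.exp (-(2 * (u * (1 - u)) * (2 / π ^ 2 * t ^ 2))) := by
      linarith [Real.add_one_le_exp (-(2 * (u * (1 - u)) * (2 / π ^ 2 * t ^ 2)))]
    _ = Real.exp ((2 : ℕ) * -(2 / π ^ 2 * (u * (1 - u)) * t ^ 2)) := by congr 1; push_cast; ring

theorem norm_integral_exp_mul_I_bernoulli_le {Ω : Type*} [MeasurableSpace Ω] {μ : Measure Ω}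
    [IsProbabilityMeasure μ] {X : Ω → ℝ} (hX : Measurable X) (h01 : ∀ ω, X ω = 0 ∨ X ω = 1)
    {u : ℝ} (hu : μ.real {ω | X ω = 1} = u) {t : ℝ} (ht : |t| ≤ π) :
    ‖∫ ω, Complex.exp (t * Complex.I * ((X ω : ℂ) - u)) ∂μ‖
      ≤ Real.exp (-(2 / π ^ 2 * (u * (1 - u)) * t ^ 2)) := by
  have hu01 : u ∈ Set.Icc (0 : ℝ) 1 := hu ▸ ⟨measureReal_nonneg, measureReal_le_one⟩
  rw [integral_comp_of_eq_zero_or_one hX h01 (fun x : ℝ => Complex.exp (t * Complex.I * (x - u))),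
    hu]
  have hfactor : (1 - u) • Complex.exp (t * Complex.I * ((0 : ℝ) - u))
        + u • Complex.exp (t * Complex.I * ((1 : ℝ) - u))
      = Complex.exp ((-(t * u) : ℝ) * Complex.I) * (1 + u * (Complex.exp (t * Complex.I) - 1)) := by
    have e0 : Complex.exp (t * Complex.I * ((0 : ℝ) - u))
        = Complex.exp ((-(t * u) : ℝ) * Complex.I) := by
      congr 1; push_cast; ring
    have e1 : Complex.exp (t * Complex.I * ((1 : ℝ) - u))
        = Complex.exp ((-(t * u) : ℝ) * Complex.I) * Complex.exp (t * Complex.I) := by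
      rw [← Complex.exp_add]; congr 1; push_cast; ring
    rw [e0, e1, Complex.real_smul, Complex.real_smul]
    push_cast
    ring
  rw [hfactor, norm_mul, Complex.norm_exp_ofReal_mul_I, one_mul]
  exact norm_one_add_mul_exp_sub_one_le hu01 ht

theorem norm_integral_exp_mul_I_sum_bernoulli_le {Ω ι : Type*} [MeasurableSpace Ω]
    {μ : Measure Ω} [IsProbabilityMeasure μ] [Fintype ι] {X : ι → Ω → ℝ}
    (hX : ∀ i, Measurable (X i)) (h01 : ∀ i ω, X i ω = 0 ∨ X i ω = 1) (hindep : iIndepFun X μ)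
    {u : ι → ℝ} (hu : ∀ i, μ.real {ω | X i ω = 1} = u i) {t : ℝ} (ht : |t| ≤ π) :
    ‖∫ ω, Complex.exp (t * Complex.I * ∑ i, ((X i ω : ℂ) - u i)) ∂μ‖
      ≤ Real.exp (-(2 / π ^ 2 * (∑ i, u i * (1 - u i)) * t ^ 2)) := by
  have hprod : ∫ ω, Complex.exp (t * Complex.I * ∑ i, ((X i ω : ℂ) - u i)) ∂μ
      = ∏ i, ∫ ω, Complex.exp (t * Complex.I * ((X i ω : ℂ) - u i)) ∂μ := by
    simp_rw [Finset.mul_sum, Complex.exp_sum]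
    exact hindep.integral_fun_prod_comp
      (f := fun i (x : ℝ) => Complex.exp (t * Complex.I * ((x : ℂ) - u i)))
      (fun i => (hX i).aemeasurable) (fun i => by fun_prop)
  calc ‖∫ ω, Complex.exp (t * Complex.I * ∑ i, ((X i ω : ℂ) - u i)) ∂μ‖
      ≤ ∏ i, Real.exp (-(2 / π ^ 2 * (u i * (1 - u i)) * t ^ 2)) := by
        rw [hprod, norm_prod]
        exact Finset.prod_le_prod (fun i _ => norm_nonneg _)
          (fun i _ => norm_integral_exp_mul_I_bernoulli_le (hX i) (h01 i) (hu i) ht)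
    _ = Real.exp (-(2 / π ^ 2 * (∑ i, u i * (1 - u i)) * t ^ 2)) := by
        rw [← Real.exp_sum, Finset.mul_sum, Finset.sum_mul, ← Finset.sum_neg_distrib]

theorem stmt_16 :
    ∃ κ : ℝ, 0 < κ ∧
      ∀ (Ω : Type) (_ : MeasureSpace Ω), IsProbabilityMeasure (ℙ : Measure Ω) →
      ∀ (N : ℕ), 0 < N →
      ∀ (u : Fin N → ℝ), (∀ n, u n ∈ Set.Icc (0:ℝ) 1) →
      ∀ (X : Fin N → Ω → ℝ), (∀ n, Measurable (X n)) →
        (∀ n ω, X n ω = 0 ∨ X n ω = 1) →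
        (∀ n, (ℙ {ω | X n ω = 1}).toReal = u n) →
        iIndepFun X ℙ →
      ∀ θ ∈ Set.Ioo (-(π * Real.sqrt N)) (π * Real.sqrt N),
        ‖(∫ ω, Complex.exp
            ((θ / Real.sqrt N : ℝ) * Complex.I * (∑ n, ((X n ω : ℂ) - (u n : ℂ)))) ∂ℙ)‖ ≤
          Real.exp (-(κ * ((1 / (N : ℝ)) * ∑ n, u n * (1 - u n)) * θ ^ 2)) := by
  refine ⟨2 / π ^ 2, by positivity, ?_⟩
  intro Ω _ _ N hN u _ X hX h01 hu hindep θ hθ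
  have hsqrtN : 0 < Real.sqrt N := Real.sqrt_pos.2 (Nat.cast_pos.2 hN)
  have ht : |θ / Real.sqrt N| ≤ π := by
    rw [abs_div, abs_of_pos hsqrtN, div_le_iff₀ hsqrtN]
    exact (abs_lt.2 hθ).le
  convert norm_integral_exp_mul_I_sum_bernoulli_le hX h01 hindep hu ht using 3
  rw [div_pow, Real.sq_sqrt (Nat.cast_nonneg N)]
  ring
end
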